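/- Let Y ⊆ ℝ^d be compact, and for each K let Z_K = {z_K^1, …, z_K^K} ⊆ Y be a finite set of points such that the empirical measures (1/K)Σ_k δ_{z_K^k} converge weakly to a measure P_∞ with density ρ_∞ satisfying inf_{y∈Y} ρ_∞(y) > 0. Then the covering radius r_K = max_{y∈Y} min_{k≤K} ‖y − z_K^k‖ converges to 0 as K → ∞. -/

import Mathlib

/-!
Fix `ε > 0` and cover the compact set `Y` by finitely many balls of radius `ε / 4` centred in `Y`.
Each ball `B` has `P_∞(B) ≥ m · vol(B ∩ Y) > 0`, and `P_∞(∂B) = 0` because `P_∞` is absolutely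
continuous and spheres are Lebesgue-null. Weak convergence at `B` then forces the empirical
frequency of `B` to be positive, i.e. some `z_K^k` to lie in `B`, for all large `K`; so every point
of `Y` is within `ε / 2` of `Z_K`. Weak convergence at `univ` shows that `P_∞` is a probability
measure, so the limit `P_∞(B)` is finite and its real value is positive.
-/

open MeasureTheory Metric Set Filter Topology

section CoveringRadius

variable {X : Type*} [PseudoMetricSpace X]

noncomputable def coveringRadius (Y : Set X) {K : ℕ} (z : Fin K → X) : ℝ :=
  ⨆ y : Y, ⨅ k, dist (y : X) (z k)

lemma coveringRadius_nonneg (Y : Set X) {K : ℕ} (z : Fin K → X) : 0 ≤ coveringRadius Y z :=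
  Real.iSup_nonneg fun _ => Real.iInf_nonneg fun _ => dist_nonneg

lemma coveringRadius_le {Y : Set X} {K : ℕ} {z : Fin K → X} {r : ℝ} (hr : 0 ≤ r)
    (h : ∀ y ∈ Y, ∃ k, dist y (z k) ≤ r) : coveringRadius Y z ≤ r :=
  Real.iSup_le (fun y => (h y y.2).elim fun k hk =>
    ciInf_le_of_le ⟨0, forall_mem_range.2 fun _ => dist_nonneg⟩ k hk) hr

lemma tendsto_coveringRadius_zero {Y : Set X} (hY : IsCompact Y) (z : (K : ℕ) → Fin K → X)
    (h : ∀ y ∈ Y, ∀ ε > 0, ∀ᶠ K in atTop, ∃ k, z K k ∈ ball y ε) :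
    Tendsto (fun K => coveringRadius Y (z K)) atTop (𝓝 0) := by
  refine tendsto_order.2 ⟨fun a ha => .of_forall fun K => ha.trans_le (coveringRadius_nonneg _ _),
    fun ε hε => ?_⟩
  have hε4 : 0 < ε / 4 := by positivity
  obtain ⟨t, htY, ht, hYt⟩ := hY.finite_cover_balls hε4
  have hnear : ∀ᶠ K in atTop, ∀ x ∈ t, ∃ k, z K k ∈ ball x (ε / 4) :=
    ht.eventually_all.2 fun x hx => h x (htY hx) _ hε4
  filter_upwards [hnear] with K hK
  refine (coveringRadius_le (half_pos hε).le fun y hy => ?_).trans_lt (half_lt_self hε)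
  obtain ⟨x, hxt, hyx⟩ := mem_iUnion₂.1 (hYt hy)
  obtain ⟨k, hkx⟩ := hK x hxt
  refine ⟨k, (dist_triangle_right y (z K k) x).trans ?_⟩
  linarith [mem_ball.1 hyx, mem_ball.1 hkx]

end CoveringRadius

section Empirical

variable {X : Type*}

-- Classical decidability, so that this unfolds to the averages in the weak-convergence hypothesis.
open Classical in
noncomputable def empiricalFreq {K : ℕ} (z : Fin K → X) (E : Set X) : ℝ :=
  (1 / (K : ℝ)) * ∑ k, if z k ∈ E then (1 : ℝ) else 0

lemma empiricalFreq_univ {K : ℕ} (hK : K ≠ 0) (z : Fin K → X) : empiricalFreq z univ = 1 := by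
  simp [empiricalFreq, hK]

lemma exists_mem_of_empiricalFreq_pos {K : ℕ} {z : Fin K → X} {E : Set X}
    (h : 0 < empiricalFreq z E) : ∃ k, z k ∈ E := by
  contrapose! h
  simp [empiricalFreq, h]

variable {z : (K : ℕ) → Fin K → X}

lemma eventually_exists_mem_of_tendsto_empiricalFreq {E : Set X} {p : ℝ}
    (h : Tendsto (fun K => empiricalFreq (z K) E) atTop (𝓝 p)) (hp : 0 < p) :
    ∀ᶠ K in atTop, ∃ k, z K k ∈ E :=
  (h.eventually (eventually_gt_nhds hp)).mono fun _ => exists_mem_of_empiricalFreq_pos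

lemma isProbabilityMeasure_of_tendsto_empiricalFreq_univ [MeasurableSpace X] {P : Measure X}
    (h : Tendsto (fun K => empiricalFreq (z K) univ) atTop (𝓝 (P univ).toReal)) :
    IsProbabilityMeasure P := by
  have h_one : Tendsto (fun K => empiricalFreq (z K) univ) atTop (𝓝 1) :=
    tendsto_const_nhds.congr' <|
      (eventually_ne_atTop 0).mono fun K hK => (empiricalFreq_univ hK _).symm
  exact ⟨ENNReal.toReal_eq_one_iff _ |>.1 (tendsto_nhds_unique h h_one)⟩

end Empirical

namespace MeasureTheory.Measure

lemma addHaar_frontier_ball {E : Type*} [NormedAddCommGroup E] [NormedSpace ℝ E]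
    [MeasurableSpace E] [BorelSpace E] [FiniteDimensional ℝ E] (μ : Measure E) [μ.IsAddHaarMeasure]
    (x : E) (r : ℝ) : μ (frontier (ball x r)) = 0 := by
  rcases subsingleton_or_nontrivial E with _ | _
  · rw [(isClopen_discrete _).frontier_eq, measure_empty]
  · exact measure_mono_null frontier_ball_subset_sphere (addHaar_sphere μ x r)

end MeasureTheory.Measure

lemma mul_measure_inter_le_withDensity_restrict {α : Type*} [MeasurableSpace α] {μ : Measure α}
    {Y s : Set α} (hY : MeasurableSet Y) (hs : MeasurableSet s) {f : α → ENNReal} {c : ENNReal}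
    (hf : ∀ y ∈ Y, c ≤ f y) : c * μ (s ∩ Y) ≤ (μ.restrict Y).withDensity f s := by
  rw [withDensity_apply _ hs, Measure.restrict_restrict hs, ← setLIntegral_const]
  exact setLIntegral_mono' (hs.inter hY) fun y hy => hf y hy.2

open MeasureTheory Real Set Filter Classical in

theorem covering_radius_tendsto_zero_general (d : ℕ)
    (Y : Set (EuclideanSpace ℝ (Fin d))) (hYc : IsCompact Y)
    (hYball : ∀ y ∈ Y, ∀ ε : ℝ, 0 < ε → 0 < volume (Metric.ball y ε ∩ Y))
    (z : (K : ℕ) → Fin K → EuclideanSpace ℝ (Fin d))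
    (ρ : EuclideanSpace ℝ (Fin d) → ℝ)
    (m : ℝ) (hm : 0 < m) (hlb : ∀ y ∈ Y, m ≤ ρ y)
    (hweak : ∀ E : Set (EuclideanSpace ℝ (Fin d)), MeasurableSet E →
      ((volume.restrict Y).withDensity (fun y => ENNReal.ofReal (ρ y)))
          (frontier E) = 0 →
      Tendsto (fun K : ℕ => (1 / (K:ℝ)) * ∑ k : Fin K,
          (if z K k ∈ E then (1:ℝ) else 0)) atTop
        (nhds (((volume.restrict Y).withDensity
          (fun y => ENNReal.ofReal (ρ y))) E).toReal)) :
    Tendsto (fun K : ℕ => ⨆ y : Y, ⨅ k : Fin K, dist (y : EuclideanSpace ℝ (Fin d)) (z K k))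
      atTop (nhds 0) := by
  set P := (volume.restrict Y).withDensity (fun y => ENNReal.ofReal (ρ y))
  have : IsProbabilityMeasure P :=
    isProbabilityMeasure_of_tendsto_empiricalFreq_univ (hweak univ .univ (by simp))
  have hP_ac : P ≪ volume :=
    (withDensity_absolutelyContinuous _ _).trans Measure.absolutelyContinuous_restrict
  refine tendsto_coveringRadius_zero hYc z fun y hy ε hε => ?_
  have hP_ball : 0 < P (Metric.ball y ε) :=
    (ENNReal.mul_pos (ENNReal.ofReal_pos.2 hm).ne' (hYball y hy ε hε).ne').trans_le
      (mul_measure_inter_le_withDensity_restrict hYc.measurableSet measurableSet_ball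
        fun y hy => ENNReal.ofReal_le_ofReal (hlb y hy))
  exact eventually_exists_mem_of_tendsto_empiricalFreq
    (hweak _ measurableSet_ball (hP_ac (Measure.addHaar_frontier_ball volume y ε)))
    (ENNReal.toReal_pos hP_ball.ne' (measure_ne_top P _))

open MeasureTheory Real Set Filter Classical in
/-- If Y is compact, every ball around a point of Y meets Y in positive volume,
and the empirical measures of the K-point sets Z_K converge weakly to a measure
with density ρ∞ bounded below on Y by a positive constant, then the covering
radius r_K = max_{y∈Y} min_k ‖y - z_K^k‖ tends to 0. -/
theorem covering_radius_tendsto_zero (d : ℕ) (hd : 1 ≤ d)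
    (Y : Set (EuclideanSpace ℝ (Fin d))) (hYc : IsCompact Y) (hYne : Y.Nonempty)
    (hYball : ∀ y ∈ Y, ∀ ε : ℝ, 0 < ε → 0 < volume (Metric.ball y ε ∩ Y))
    (z : (K : ℕ) → Fin K → EuclideanSpace ℝ (Fin d)) (hz : ∀ K k, z K k ∈ Y)
    (ρ : EuclideanSpace ℝ (Fin d) → ℝ) (hρm : Measurable ρ)
    (m : ℝ) (hm : 0 < m) (hlb : ∀ y ∈ Y, m ≤ ρ y)
    (hweak : ∀ E : Set (EuclideanSpace ℝ (Fin d)), MeasurableSet E →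
      ((volume.restrict Y).withDensity (fun y => ENNReal.ofReal (ρ y)))
          (frontier E) = 0 →
      Tendsto (fun K : ℕ => (1 / (K:ℝ)) * ∑ k : Fin K,
          (if z K k ∈ E then (1:ℝ) else 0)) atTop
        (nhds (((volume.restrict Y).withDensity
          (fun y => ENNReal.ofReal (ρ y))) E).toReal)) :
    Tendsto (fun K : ℕ => ⨆ y : Y, ⨅ k : Fin K, dist (y : EuclideanSpace ℝ (Fin d)) (z K k))
      atTop (nhds 0) :=
  covering_radius_tendsto_zero_general d Y hYc hYball z ρ m hm hlb hweak
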